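/- Let p be a probability mass function on a countable type 𝒳 and let c : 𝒳 → List Bool be a prefix-free binary code (for distinct x, y, c(x) is not a prefix of c(y)). Then the expected codeword length satisfies Σ_x p(x)·|c(x)| ≥ H(p), where H(p) is the Shannon entropy (base 2) of p. -/
import Mathlib


/-- Shannon entropy (base 2) of a pmf on a countable type,
with the convention `0 * logb 2 0 = 0`. -/
noncomputable def shannonEntropy {α : Type*} (p : α → ℝ) : ℝ :=
  ∑' x, -(p x * Real.logb 2 (p x))

/-- The finset of all boolean lists of length `m`. -/
noncomputable def allLists (m : ℕ) : Finset (List Bool) :=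
  Finset.univ.image (fun f : Fin m → Bool => List.ofFn f)

lemma mem_allLists {m : ℕ} {l : List Bool} : l ∈ allLists m ↔ l.length = m := by
  constructor
  · intro h
    simp only [allLists, Finset.mem_image] at h
    obtain ⟨f, -, rfl⟩ := h
    simp
  · intro h
    subst h
    simp only [allLists, Finset.mem_image]
    exact ⟨l.get, Finset.mem_univ _, List.ofFn_get l⟩

lemma card_allLists (m : ℕ) : (allLists m).card = 2 ^ m := by
  rw [allLists, Finset.card_image_of_injective _ List.ofFn_injective]
  simp [Finset.card_univ]

lemma kraft_nat {𝒳 : Type*} (c : 𝒳 → List Bool)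
    (hpf : ∀ x y : 𝒳, x ≠ y → ¬ c x <+: c y)
    (F : Finset 𝒳) (n : ℕ) (hn : ∀ x ∈ F, (c x).length ≤ n) :
    ∑ x ∈ F, 2 ^ (n - (c x).length) ≤ 2 ^ n := by
  classical
  set E : 𝒳 → Finset (List Bool) := fun x =>
    (allLists (n - (c x).length)).image (fun t => c x ++ t) with hE
  have hcard : ∀ x, (E x).card = 2 ^ (n - (c x).length) := by
    intro x
    rw [hE]
    rw [Finset.card_image_of_injective _ (fun a b h => List.append_cancel_left h)]
    exact card_allLists _
  have hdisj : ∀ x ∈ F, ∀ y ∈ F, x ≠ y → Disjoint (E x) (E y) := by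
    intro x _ y _ hxy
    rw [Finset.disjoint_left]
    intro l hlx hly
    simp only [hE, Finset.mem_image] at hlx hly
    obtain ⟨t1, -, rfl⟩ := hlx
    obtain ⟨t2, -, h2⟩ := hly
    have hx : c x <+: c x ++ t1 := List.prefix_append _ _
    have hy : c y <+: c x ++ t1 := h2 ▸ List.prefix_append _ _
    rcases List.prefix_or_prefix_of_prefix hx hy with h | h
    · exact hpf x y hxy h
    · exact hpf y x hxy.symm h
  have hsub : F.biUnion E ⊆ allLists n := by
    intro l hl
    simp only [Finset.mem_biUnion] at hl
    obtain ⟨x, hx, hl⟩ := hl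
    simp only [hE, Finset.mem_image] at hl
    obtain ⟨t, ht, rfl⟩ := hl
    rw [mem_allLists] at ht ⊢
    simp [ht, Nat.add_sub_cancel' (hn x hx)]
  calc ∑ x ∈ F, 2 ^ (n - (c x).length) = (F.biUnion E).card := by
        rw [Finset.card_biUnion hdisj]; exact (Finset.sum_congr rfl fun x _ => (hcard x).symm)
    _ ≤ (allLists n).card := Finset.card_le_card hsub
    _ = 2 ^ n := card_allLists n

/-- Kraft inequality, real version, finite sums. -/
lemma kraft_real {𝒳 : Type*} (c : 𝒳 → List Bool)
    (hpf : ∀ x y : 𝒳, x ≠ y → ¬ c x <+: c y)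
    (F : Finset 𝒳) :
    ∑ x ∈ F, (2:ℝ) ^ (-((c x).length : ℝ)) ≤ 1 := by
  classical
  set n : ℕ := F.sup (fun x => (c x).length) with hn
  have hle : ∀ x ∈ F, (c x).length ≤ n :=
    fun x hx => Finset.le_sup (f := fun x => (c x).length) hx
  have key := kraft_nat c hpf F n hle
  have h2 : (0:ℝ) < 2 ^ n := by positivity
  have : ∑ x ∈ F, (2:ℝ) ^ (-((c x).length : ℝ)) =
      (∑ x ∈ F, (2:ℝ) ^ (n - (c x).length)) / 2 ^ n := by
    rw [Finset.sum_div]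
    refine Finset.sum_congr rfl fun x hx => ?_
    rw [eq_div_iff (ne_of_gt h2)]
    rw [← Real.rpow_natCast (2:ℝ) (n - (c x).length), ← Real.rpow_natCast (2:ℝ) n,
      ← Real.rpow_add (by norm_num)]
    congr 1
    have := hle x hx
    push_cast [Nat.cast_sub this]
    ring
  rw [this]
  rw [div_le_one h2]
  calc (∑ x ∈ F, (2:ℝ) ^ (n - (c x).length))
      = ((∑ x ∈ F, 2 ^ (n - (c x).length) : ℕ) : ℝ) := by push_cast; rfl
    _ ≤ ((2^n : ℕ) : ℝ) := by exact_mod_cast key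
    _ = 2 ^ n := by push_cast; rfl

/-- Source-coding lower bound: if `p` is a pmf on a countable type `𝒳` and
`c : 𝒳 → List Bool` is a prefix-free binary code (for distinct `x, y`, `c x` is not a
prefix of `c y`), then the expected codeword length is at least the Shannon entropy
(base 2) of `p`: `∑ₓ p(x)·|c(x)| ≥ H(p)`. -/
theorem expected_length_ge_entropy {𝒳 : Type*} [Countable 𝒳]
    (p : 𝒳 → ℝ) (c : 𝒳 → List Bool)
    (hp_nonneg : ∀ x, 0 ≤ p x) (hp_sum : HasSum p 1)
    (hpf : ∀ x y : 𝒳, x ≠ y → ¬ c x <+: c y)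
    (hL : Summable fun x => p x * ((c x).length : ℝ)) :
    shannonEntropy p ≤ ∑' x, p x * ((c x).length : ℝ) := by
  classical
  rw [shannonEntropy]
  set q : 𝒳 → ℝ := fun x => (2:ℝ) ^ (-((c x).length : ℝ)) with hq
  have hq_pos : ∀ x, 0 < q x := fun x => Real.rpow_pos_of_pos (by norm_num) _
  have hq_sum : Summable q := summable_of_sum_le (fun x => (hq_pos x).le) (kraft_real c hpf)
  have hQ : ∑' x, q x ≤ 1 := Summable.tsum_le_of_sum_le hq_sum (kraft_real c hpf)
  have hlog2 : (0:ℝ) < Real.log 2 := Real.log_pos (by norm_num)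
  have hlogq : ∀ x, Real.log (q x) = -((c x).length : ℝ) * Real.log 2 := by
    intro x
    rw [hq]
    rw [Real.log_rpow (by norm_num)]
  by_cases hent : Summable (fun x => -(p x * Real.logb 2 (p x)))
  · have key : ∀ x, -(p x * Real.logb 2 (p x)) ≤
        p x * ((c x).length : ℝ) + (q x - p x) / Real.log 2 := by
      intro x
      rcases eq_or_lt_of_le (hp_nonneg x) with hp0 | hp0
      · rw [← hp0]
        simp only [zero_mul, neg_zero, sub_zero]
        positivity
      · have key2 : p x * (Real.log (q x) - Real.log (p x)) ≤ q x - p x := by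
          have h1 := Real.log_le_sub_one_of_pos (div_pos (hq_pos x) hp0)
          rw [Real.log_div (ne_of_gt (hq_pos x)) (ne_of_gt hp0)] at h1
          have h2 := mul_le_mul_of_nonneg_left h1 (hp_nonneg x)
          calc p x * (Real.log (q x) - Real.log (p x)) ≤ p x * (q x / p x - 1) := h2
            _ = q x - p x := by field_simp
        calc -(p x * Real.logb 2 (p x))
            = (-(p x * Real.log (p x))) / Real.log 2 := by rw [Real.logb]; ring
          _ ≤ (-(p x * Real.log (q x)) + (q x - p x)) / Real.log 2 := by
              rw [div_le_div_iff_of_pos_right hlog2]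
              rw [mul_sub] at key2
              linarith
          _ = p x * ((c x).length : ℝ) + (q x - p x) / Real.log 2 := by
              rw [hlogq x]
              field_simp
    have hR : Summable (fun x => p x * ((c x).length : ℝ) + (q x - p x) / Real.log 2) :=
      hL.add ((hq_sum.sub hp_sum.summable).div_const _)
    calc (∑' x, -(p x * Real.logb 2 (p x)))
        ≤ ∑' x, (p x * ((c x).length : ℝ) + (q x - p x) / Real.log 2) :=
          Summable.tsum_le_tsum key hent hR
      _ = (∑' x, p x * ((c x).length : ℝ)) + ((∑' x, q x) - 1) / Real.log 2 := by
          rw [Summable.tsum_add hL ((hq_sum.sub hp_sum.summable).div_const _), tsum_div_const,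
            Summable.tsum_sub hq_sum hp_sum.summable, hp_sum.tsum_eq]
      _ ≤ ∑' x, p x * ((c x).length : ℝ) := by
          have : ((∑' x, q x) - 1) / Real.log 2 ≤ 0 :=
            div_nonpos_of_nonpos_of_nonneg (by linarith) hlog2.le
          linarith
  · rw [tsum_eq_zero_of_not_summable hent]
    exact tsum_nonneg fun x => mul_nonneg (hp_nonneg x) (Nat.cast_nonneg _)
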